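/- arXiv:1402.1632 — 2 statements merged into one kernel-verified Lean document; each statement's English description precedes it below -/
import Mathlib

section
/- Let τ be an imaginary quadratic number in the standard fundamental domain 𝓕 of SL₂(ℤ) acting on ℍ, satisfying bτ² + (a-d)τ - c = 0 with a, b, c, d ∈ ℤ, b > 0, gcd(b, a-d, c) = 1, and let Δ = (a-d)² + 4bc < 0 (the discriminant of the quadratic). Then the absolute logarithmic Weil height of τ satisfies h(τ) ≤ (1/2) log|Δ|. -/
open Polynomial

/-- The primitive integral minimal polynomial of an algebraic number. -/
noncomputable def intMinPoly (a : ℂ) : Polynomial ℤ :=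
  (IsLocalization.integerNormalization (nonZeroDivisors ℤ) (minpoly ℚ a)).primPart

/-- The absolute logarithmic Weil height of an algebraic number, via the
Mahler measure of its primitive integral minimal polynomial. -/
noncomputable def logHeight (a : ℂ) : ℝ :=
  (Real.log |((intMinPoly a).leadingCoeff : ℝ)| +
    (((intMinPoly a).aroots ℂ).map (fun z => Real.log (max 1 ‖z‖))).sum) /
    (minpoly ℚ a).natDegree


/-! Up to sign, `intMinPoly τ` is `b X² + (a - d) X - c`: this polynomial is primitive by the gcd
condition and has the degree of the minimal polynomial. Its roots are `τ` and `conj τ`, both of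
modulus `‖τ‖ ≥ 1`, so `2 h(τ) = log b + 2 log ‖τ‖ = log (b ‖τ‖²) = log (-c)` by Vieta. In the
fundamental domain `|a - d| = 2 b |Re τ| ≤ b` and `-c = b ‖τ‖² ≥ b`, which for an integer `b ≥ 1`
gives `-c ≤ -Δ`. -/

open ComplexConjugate

theorem Polynomial.IsPrimitive.Int.associated_of_map_cast_associated {p q : ℤ[X]}
    (hp : p.IsPrimitive) (hq : q.IsPrimitive)
    (h : Associated (p.map (Int.castRingHom ℚ)) (q.map (Int.castRingHom ℚ))) : Associated p q :=
  associated_of_dvd_dvd ((Int.dvd_iff_map_cast_dvd_map_cast p q hp).2 h.dvd)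
    ((Int.dvd_iff_map_cast_dvd_map_cast q p hq).2 h.symm.dvd)

lemma Polynomial.associated_C_mul_self {K : Type*} [Field K] {a : K} (ha : a ≠ 0) (p : K[X]) :
    Associated (C a * p) p :=
  associated_unit_mul_left p (C a) (isUnit_C.2 (isUnit_iff_ne_zero.2 ha))

lemma map_intMinPoly_associated_minpoly {τ : ℂ} (hτ : IsIntegral ℚ τ) :
    Associated ((intMinPoly τ).map (Int.castRingHom ℚ)) (minpoly ℚ τ) := by
  set n := IsLocalization.integerNormalization (nonZeroDivisors ℤ) (minpoly ℚ τ)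
  obtain ⟨u, hu, hn⟩ := IsLocalization.integerNormalization_spec (nonZeroDivisors ℤ) (minpoly ℚ τ)
  have hn0 : n ≠ 0 := by
    rw [Ne, IsFractionRing.integerNormalization_eq_zero_iff]
    exact minpoly.ne_zero hτ
  have hcontent : (n.content : ℚ) ≠ 0 := by exact_mod_cast (content_eq_zero_iff.not.2 hn0)
  have hu0 : (u : ℚ) ≠ 0 := by exact_mod_cast nonZeroDivisors.ne_zero hu
  have hmap : n.map (Int.castRingHom ℚ) =
      C (n.content : ℚ) * (intMinPoly τ).map (Int.castRingHom ℚ) := by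
    conv_lhs => rw [n.eq_C_content_mul_primPart]
    simp [intMinPoly, n]
  refine (hmap ▸ (associated_C_mul_self hcontent _).symm).trans ?_
  rw [show n.map (Int.castRingHom ℚ) = C (u : ℚ) * minpoly ℚ τ by
    rw [← smul_eq_C_mul, Int.cast_smul_eq_zsmul]; exact hn]
  exact associated_C_mul_self hu0 _

lemma associated_intMinPoly {τ : ℂ} {p : ℤ[X]} (hτ : IsIntegral ℚ τ) (hp : p.IsPrimitive)
    (hroot : aeval τ p = 0) (hdeg : p.natDegree = (minpoly ℚ τ).natDegree) :
    Associated p (intMinPoly τ) := by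
  have hdeg' : (p.map (Int.castRingHom ℚ)).natDegree = (minpoly ℚ τ).natDegree := by
    rwa [natDegree_map_eq_of_injective Int.cast_injective]
  have hp0 : p.map (Int.castRingHom ℚ) ≠ 0 := by
    intro h
    have := minpoly.natDegree_pos hτ
    simp [h] at hdeg'
    omega
  have hdvd : minpoly ℚ τ ∣ p.map (Int.castRingHom ℚ) :=
    minpoly.dvd ℚ τ (by rwa [← algebraMap_int_eq, aeval_map_algebraMap])
  refine IsPrimitive.Int.associated_of_map_cast_associated hp (isPrimitive_primPart _) ?_
  exact ((associated_of_dvd_of_natDegree_le hdvd hp0 hdeg'.le).symm).trans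
    (map_intMinPoly_associated_minpoly hτ).symm

lemma logHeight_eq_of_associated {τ : ℂ} {p : ℤ[X]} (h : Associated p (intMinPoly τ)) :
    logHeight τ = (Real.log |(p.leadingCoeff : ℝ)| +
      ((p.aroots ℂ).map fun z => Real.log (max 1 ‖z‖)).sum) / (minpoly ℚ τ).natDegree := by
  have hlc : |(p.leadingCoeff : ℝ)| = |((intMinPoly τ).leadingCoeff : ℝ)| := by
    have := Int.associated_iff_natAbs.1 (h.map leadingCoeffHom)
    simp only [leadingCoeffHom_apply] at this
    rw [← Int.cast_abs, ← Int.cast_abs, ← Nat.cast_natAbs, ← Nat.cast_natAbs, this]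
  have hroots : p.aroots ℂ = (intMinPoly τ).aroots ℂ :=
    (h.map (mapRingHom (algebraMap ℤ ℂ))).roots_eq
  rw [logHeight, hlc, hroots]

lemma Polynomial.isPrimitive_quadratic {b e c : ℤ} (h : Int.gcd (Int.gcd b e) c = 1) :
    (C b * X ^ 2 + C e * X + C c).IsPrimitive := by
  intro k hk
  rw [C_dvd_iff_dvd_coeff] at hk
  have h0 := hk 0
  have h1 := hk 1
  have h2 := hk 2
  simp only [coeff_add, coeff_C_mul, coeff_X_pow, coeff_X, coeff_C] at h0 h1 h2
  norm_num at h0 h1 h2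
  have : k ∣ (Int.gcd (Int.gcd b e) c : ℤ) := Int.dvd_coe_gcd (Int.dvd_coe_gcd h2 h1) h0
  rw [h] at this
  exact isUnit_of_dvd_one (by exact_mod_cast this)

lemma Polynomial.roots_quadratic_of_vieta {K : Type*} [Field K] {b e c x y : K} (hb : b ≠ 0)
    (hsum : b * (x + y) = -e) (hprod : b * (x * y) = c) :
    (C b * X ^ 2 + C e * X + C c).roots = {x, y} := by
  obtain rfl : e = -(b * (x + y)) := by linear_combination hsum
  obtain rfl : c = b * (x * y) := by linear_combination -hprod
  have : C b * X ^ 2 + C (-(b * (x + y))) * X + C (b * (x * y)) =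
      C b * ((X - C x) * (X - C y)) := by
    simp only [C_neg, C_mul, C_add]
    ring
  rw [this, roots_C_mul _ hb, roots_mul (mul_ne_zero (X_sub_C_ne_zero x) (X_sub_C_ne_zero y)),
    roots_X_sub_C, roots_X_sub_C]
  rfl

lemma Complex.vieta_of_quadratic_eq_zero {b e c : ℝ} {τ : ℂ} (hτ : τ.im ≠ 0)
    (h : (b : ℂ) * τ ^ 2 + e * τ + c = 0) :
    (b : ℂ) * (τ + conj τ) = -e ∧ (b : ℂ) * (τ * conj τ) = c := by
  have hconj : (b : ℂ) * conj τ ^ 2 + e * conj τ + c = 0 := by simpa using congrArg conj h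
  have hne : τ - conj τ ≠ 0 := sub_ne_zero.2 fun h' => hτ (conj_eq_iff_im.1 h'.symm)
  have hsum : (b : ℂ) * (τ + conj τ) = -e := by
    have : (τ - conj τ) * ((b : ℂ) * (τ + conj τ) + e) = 0 := by linear_combination h - hconj
    linear_combination (mul_eq_zero.1 this).resolve_left hne
  exact ⟨hsum, by linear_combination τ * hsum - h⟩

lemma Complex.vieta_re_norm_of_quadratic_eq_zero {b e c : ℝ} {τ : ℂ} (hτ : τ.im ≠ 0)
    (h : (b : ℂ) * τ ^ 2 + e * τ + c = 0) :
    b * (2 * τ.re) = -e ∧ b * ‖τ‖ ^ 2 = c := by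
  obtain ⟨hsum, hprod⟩ := vieta_of_quadratic_eq_zero hτ h
  rw [add_conj] at hsum
  rw [mul_conj, normSq_eq_norm_sq] at hprod
  exact ⟨by exact_mod_cast hsum, by exact_mod_cast hprod⟩

lemma logHeight_eq_of_quadratic {τ : ℂ} {b e c : ℤ} (hτ : τ.im ≠ 0)
    (hdeg : (minpoly ℚ τ).natDegree = 2) (hb : 0 < b) (hgcd : Int.gcd (Int.gcd b e) c = 1)
    (h : (b : ℂ) * τ ^ 2 + e * τ + c = 0) :
    logHeight τ = (Real.log b + 2 * Real.log (max 1 ‖τ‖)) / 2 := by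
  set p : ℤ[X] := C b * X ^ 2 + C e * X + C c
  have hint : IsIntegral ℚ τ := by
    by_contra hn
    simp [minpoly.eq_zero hn] at hdeg
  have hroot : aeval τ p = 0 := by simpa [p] using h
  have hassoc : Associated p (intMinPoly τ) := associated_intMinPoly hint
    (isPrimitive_quadratic hgcd) hroot (by rw [natDegree_quadratic hb.ne', hdeg])
  obtain ⟨hsum, hprod⟩ := Complex.vieta_of_quadratic_eq_zero (b := b) (e := e) (c := c) hτ
    (by exact_mod_cast h)
  have hroots : p.aroots ℂ = {τ, conj τ} := by
    have : p.map (algebraMap ℤ ℂ) = C (b : ℂ) * X ^ 2 + C (e : ℂ) * X + C (c : ℂ) := by simp [p]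
    rw [aroots_def, this]
    exact roots_quadratic_of_vieta (by exact_mod_cast hb.ne') (by exact_mod_cast hsum)
      (by exact_mod_cast hprod)
  rw [logHeight_eq_of_associated hassoc, hdeg, leadingCoeff_quadratic hb.ne', hroots]
  simp only [Real.log_abs, Multiset.insert_eq_cons, Multiset.map_cons, Multiset.map_singleton,
    RCLike.norm_conj, Multiset.sum_cons, Multiset.sum_singleton]
  ring

lemma sq_le_sq_and_le_of_re_norm {b e c : ℝ} {τ : ℂ} (hb : 0 ≤ b) (hre : |τ.re| ≤ 1 / 2)
    (habs : 1 ≤ ‖τ‖) (hsum : b * (2 * τ.re) = -e) (hprod : b * ‖τ‖ ^ 2 = c) :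
    e ^ 2 ≤ b ^ 2 ∧ b ≤ c := by
  have hre2 : (2 * τ.re) ^ 2 ≤ 1 := by
    rw [sq_le_one_iff_abs_le_one, abs_mul, abs_two]
    linarith
  constructor
  · calc e ^ 2 = b ^ 2 * (2 * τ.re) ^ 2 := by rw [← neg_sq, ← hsum]; ring
      _ ≤ b ^ 2 * 1 := by gcongr
      _ = b ^ 2 := mul_one _
  · calc b = b * 1 := (mul_one b).symm
      _ ≤ b * ‖τ‖ ^ 2 := by gcongr; exact one_le_pow₀ habs
      _ = c := hprod

lemma le_four_mul_sub_sq {b e c : ℤ} (hb : 0 < b) (he : e ^ 2 ≤ b ^ 2) (hc : b ≤ c) :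
    c ≤ 4 * b * c - e ^ 2 := by
  -- the slack is at least `3 b² - b`, which is nonnegative only because `b ≥ 1`
  nlinarith

theorem stmt3_general (τ : ℂ) (him : 0 < τ.im) (hre : τ.re ∈ Set.Ioc (-(1/2) : ℝ) (1/2))
    (habs : 1 ≤ ‖τ‖)
    (hdeg : (minpoly ℚ τ).natDegree = 2)
    (a b c d : ℤ) (hb : 0 < b)
    (hgcd : Int.gcd (Int.gcd b (a - d)) c = 1)
    (heq : (b : ℂ) * τ ^ 2 + ((a : ℂ) - (d : ℂ)) * τ - (c : ℂ) = 0)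
    (Δ : ℤ) (hΔdef : Δ = (a - d) ^ 2 + 4 * b * c) :
    logHeight τ ≤ (1 / 2) * Real.log (|Δ| : ℝ) := by
  have heq' : (b : ℂ) * τ ^ 2 + ((a - d : ℤ) : ℂ) * τ + ((-c : ℤ) : ℂ) = 0 := by
    push_cast
    linear_combination heq
  obtain ⟨hsum, hprod⟩ := Complex.vieta_re_norm_of_quadratic_eq_zero (b := b) (e := (a - d : ℤ))
    (c := (-c : ℤ)) him.ne' (by exact_mod_cast heq')
  obtain ⟨he, hc⟩ := sq_le_sq_and_le_of_re_norm (by positivity) (abs_le.2 ⟨hre.1.le, hre.2⟩)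
    habs hsum hprod
  have hcΔ : -c ≤ |Δ| := calc
    -c ≤ 4 * b * -c - (a - d) ^ 2 :=
      le_four_mul_sub_sq hb (by exact_mod_cast he) (by exact_mod_cast hc)
    _ = -Δ := by rw [hΔdef]; ring
    _ ≤ |Δ| := neg_le_abs Δ
  rw [logHeight_eq_of_quadratic him.ne' hdeg hb (by rwa [Int.gcd_neg]) heq', max_eq_right habs]
  calc (Real.log b + 2 * Real.log ‖τ‖) / 2 = 1 / 2 * Real.log ((-c : ℤ) : ℝ) := by
        rw [← hprod, Real.log_mul (by positivity) (by positivity), Real.log_pow]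
        push_cast
        ring
    _ ≤ 1 / 2 * Real.log (|Δ| : ℝ) := by
        gcongr
        · exact (Int.cast_pos.2 hb).trans_le hc
        · exact_mod_cast hcΔ

theorem stmt3 (τ : ℂ) (him : 0 < τ.im) (hre : τ.re ∈ Set.Ioc (-(1/2) : ℝ) (1/2))
    (habs : 1 ≤ ‖τ‖) (hbd : ‖τ‖ = 1 → 0 ≤ τ.re)
    (hdeg : (minpoly ℚ τ).natDegree = 2)
    (a b c d : ℤ) (hb : 0 < b)
    (hgcd : Int.gcd (Int.gcd b (a - d)) c = 1)
    (heq : (b : ℂ) * τ ^ 2 + ((a : ℂ) - (d : ℂ)) * τ - (c : ℂ) = 0)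
    (Δ : ℤ) (hΔdef : Δ = (a - d) ^ 2 + 4 * b * c) (hΔ : Δ < 0) :
    logHeight τ ≤ (1 / 2) * Real.log (|Δ| : ℝ) :=
  stmt3_general τ him hre habs hdeg a b c d hb hgcd heq Δ hΔdef
end

section
/- Let R = V·Q + (U - J₀)^e ∈ K[U, V] with e ≥ 1 and deg_U Q ≤ e - 1, and suppose |·| is an Archimedean absolute value on the number field K. Then there is a constant c₅ ∈ (0, 1], depending only on R and |·|, such that: for all u, v ∈ K with R(u, v) = 0, 0 < |v| < c₅ and u ≠ J₀, one has log|u - J₀| < (log|v|)/(2e). -/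
open Polynomial in
theorem stmt13 (K : Type*) [Field K] [NumberField K] (σ : K →+* ℂ) (J₀ : K)
    (e : ℕ) (he : 1 ≤ e) (Q : Polynomial (Polynomial K)) (hQ : Q.natDegree ≤ e - 1)
    (R : Polynomial (Polynomial K)) (hR : R = C X * Q + (X - C (C J₀)) ^ e) :
    ∃ c₅ ∈ Set.Ioc (0 : ℝ) 1, ∀ u v : K,
      (R.eval (C u)).eval v = 0 → 0 < ‖σ v‖ → ‖σ v‖ < c₅ → u ≠ J₀ →
      Real.log ‖σ (u - J₀)‖ < Real.log ‖σ v‖ / (2 * e) := by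
  classical
  set N : ℕ → ℝ := fun i =>
    ∑ j ∈ Finset.range ((Q.coeff i).natDegree + 1), ‖σ ((Q.coeff i).coeff j)‖ with hN
  set M : ℝ := ∑ i ∈ Finset.range (Q.natDegree + 1), N i with hM
  have hN0 : ∀ i, 0 ≤ N i := fun i => Finset.sum_nonneg fun j _ => norm_nonneg _
  have hM0 : 0 ≤ M := Finset.sum_nonneg fun i _ => hN0 i
  -- inner coefficient bound
  have key1 : ∀ (p : Polynomial K) (v : K), ‖σ v‖ ≤ 1 →
      ‖σ (p.eval v)‖ ≤ ∑ j ∈ Finset.range (p.natDegree + 1), ‖σ (p.coeff j)‖ := by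
    intro p v hv
    rw [Polynomial.eval_eq_sum_range, map_sum]
    refine (norm_sum_le _ _).trans (Finset.sum_le_sum fun j _ => ?_)
    rw [map_mul, norm_mul, map_pow, norm_pow]
    calc ‖σ (p.coeff j)‖ * ‖σ v‖ ^ j
        ≤ ‖σ (p.coeff j)‖ * 1 :=
          mul_le_mul_of_nonneg_left (pow_le_one₀ (norm_nonneg _) hv) (norm_nonneg _)
      _ = ‖σ (p.coeff j)‖ := mul_one _
  -- bound for Q evaluated
  have key2 : ∀ (u v : K), ‖σ v‖ ≤ 1 →
      ‖σ ((Q.eval (C u)).eval v)‖ ≤ M * (max 1 ‖σ u‖) ^ (e - 1) := by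
    intro u v hv
    have hB1 : (1:ℝ) ≤ max 1 ‖σ u‖ := le_max_left _ _
    have hexp : Q.eval (C u)
        = ∑ i ∈ Finset.range (Q.natDegree + 1), Q.coeff i * C u ^ i :=
      Q.eval_eq_sum_range (C u)
    rw [hexp, Polynomial.eval_finset_sum, map_sum]
    refine (norm_sum_le _ _).trans ?_
    rw [hM, Finset.sum_mul]
    refine Finset.sum_le_sum fun i hi => ?_
    have hev : ((Q.coeff i * C u ^ i : Polynomial K)).eval v
        = (Q.coeff i).eval v * u ^ i := by simp
    rw [hev, map_mul, norm_mul, map_pow, norm_pow]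
    have h1 : ‖σ ((Q.coeff i).eval v)‖ ≤ N i := key1 _ _ hv
    have hie : i ≤ e - 1 := by
      have : i ≤ Q.natDegree := Nat.lt_succ_iff.mp (Finset.mem_range.mp hi)
      exact this.trans hQ
    have h2 : ‖σ u‖ ^ i ≤ (max 1 ‖σ u‖) ^ (e - 1) := by
      calc ‖σ u‖ ^ i ≤ (max 1 ‖σ u‖) ^ i :=
            pow_le_pow_left₀ (norm_nonneg _) (le_max_right _ _) i
        _ ≤ (max 1 ‖σ u‖) ^ (e - 1) := pow_le_pow_right₀ hB1 hie
    exact mul_le_mul h1 h2 (by positivity) (hN0 i)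
  -- the equation on the zero locus
  have heq : ∀ u v : K, (R.eval (C u)).eval v = 0 →
      ‖σ (u - J₀)‖ ^ e = ‖σ v‖ * ‖σ ((Q.eval (C u)).eval v)‖ := by
    intro u v h0
    have hform : (R.eval (C u)).eval v = v * (Q.eval (C u)).eval v + (u - J₀) ^ e := by
      rw [hR]; simp
    rw [hform] at h0
    have h1 : (u - J₀) ^ e = -(v * (Q.eval (C u)).eval v) := by linear_combination h0
    calc ‖σ (u - J₀)‖ ^ e = ‖σ ((u - J₀) ^ e)‖ := by rw [map_pow, norm_pow]
      _ = ‖σ (v * (Q.eval (C u)).eval v)‖ := by rw [h1, map_neg, norm_neg]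
      _ = ‖σ v‖ * ‖σ ((Q.eval (C u)).eval v)‖ := by rw [map_mul, norm_mul]
  -- bound on u
  set B₀ : ℝ := max (max 1 (2 * ‖σ J₀‖)) (2 ^ e * (M + 1)) with hB₀
  have hB₀1 : (1:ℝ) ≤ B₀ := le_trans (le_max_left _ _) (le_max_left _ _)
  have key3 : ∀ u v : K, (R.eval (C u)).eval v = 0 → ‖σ v‖ ≤ 1 →
      max 1 ‖σ u‖ ≤ B₀ := by
    intro u v h0 hv
    by_cases hcase : ‖σ u‖ ≤ max 1 (2 * ‖σ J₀‖)
    · exact le_trans (max_le (le_max_left _ _) hcase) (le_max_left _ _)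
    · push_neg at hcase
      set b : ℝ := ‖σ u‖ with hb
      have hb1 : (1:ℝ) < b := lt_of_le_of_lt (le_max_left _ _) hcase
      have hmaxb : max 1 b = b := max_eq_right hb1.le
      have hJb : 2 * ‖σ J₀‖ < b := lt_of_le_of_lt (le_max_right _ _) hcase
      have hlow : b / 2 ≤ ‖σ (u - J₀)‖ := by
        have : ‖σ u‖ - ‖σ J₀‖ ≤ ‖σ u - σ J₀‖ := norm_sub_norm_le _ _
        rw [map_sub]
        linarith
      have hq : ‖σ ((Q.eval (C u)).eval v)‖ ≤ M * b ^ (e - 1) := by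
        have := key2 u v hv
        rwa [hmaxb] at this
      have hchain : (b / 2) ^ e ≤ M * b ^ (e - 1) := by
        calc (b / 2) ^ e ≤ ‖σ (u - J₀)‖ ^ e :=
              pow_le_pow_left₀ (by positivity) hlow e
          _ = ‖σ v‖ * ‖σ ((Q.eval (C u)).eval v)‖ := heq u v h0
          _ ≤ 1 * (M * b ^ (e - 1)) := by
              apply mul_le_mul hv hq (norm_nonneg _) zero_le_one
          _ = M * b ^ (e - 1) := one_mul _
      have hee : e - 1 + 1 = e := Nat.succ_pred_eq_of_pos he
      have hbe : b ^ e = b ^ (e - 1) * b := by rw [← pow_succ, hee]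
      have hpos : (0:ℝ) < b ^ (e - 1) := pow_pos (by linarith) _
      have hble : b ≤ 2 ^ e * M := by
        have h2 : b ^ e ≤ 2 ^ e * (M * b ^ (e - 1)) := by
          rw [div_pow] at hchain
          have h2e : (0:ℝ) < 2 ^ e := by positivity
          calc b ^ e = (b ^ e / 2 ^ e) * 2 ^ e := by field_simp
            _ ≤ (M * b ^ (e - 1)) * 2 ^ e := by
                exact mul_le_mul_of_nonneg_right hchain h2e.le
            _ = 2 ^ e * (M * b ^ (e - 1)) := by ring
        rw [hbe] at h2
        have h3 : b * b ^ (e - 1) ≤ 2 ^ e * M * b ^ (e - 1) := by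
          calc b * b ^ (e - 1) = b ^ (e - 1) * b := mul_comm _ _
            _ ≤ 2 ^ e * (M * b ^ (e - 1)) := h2
            _ = 2 ^ e * M * b ^ (e - 1) := by ring
        exact le_of_mul_le_mul_right h3 hpos
      have : b ≤ 2 ^ e * (M + 1) := by
        have h2e : (0:ℝ) ≤ 2 ^ e := by positivity
        nlinarith
      rw [hmaxb]
      exact this.trans (le_max_right _ _)
  -- constants
  set c₄ : ℝ := M * B₀ ^ (e - 1) with hc₄
  have hc₄0 : 0 ≤ c₄ := mul_nonneg hM0 (pow_nonneg (by linarith) _)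
  set c : ℝ := max c₄ 1 with hc
  have hc1 : (1:ℝ) ≤ c := le_max_right _ _
  have hc₄c : c₄ ≤ c := le_max_left _ _
  have hc2pos : (0:ℝ) < 2 * c ^ 2 := by nlinarith
  have hc5le : 1 / (2 * c ^ 2) ≤ 1 := by rw [div_le_one hc2pos]; nlinarith
  refine ⟨1 / (2 * c ^ 2), ⟨div_pos zero_lt_one hc2pos, hc5le⟩, ?_⟩
  intro u v h0 hv0 hvc huJ
  have hv1 : ‖σ v‖ ≤ 1 := by linarith
  have hBu : max 1 ‖σ u‖ ≤ B₀ := key3 u v h0 hv1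
  have hA : ‖σ (u - J₀)‖ ^ e ≤ c₄ * ‖σ v‖ := by
    calc ‖σ (u - J₀)‖ ^ e = ‖σ v‖ * ‖σ ((Q.eval (C u)).eval v)‖ := heq u v h0
      _ ≤ ‖σ v‖ * (M * (max 1 ‖σ u‖) ^ (e - 1)) :=
          mul_le_mul_of_nonneg_left (key2 u v hv1) (norm_nonneg _)
      _ ≤ ‖σ v‖ * (M * B₀ ^ (e - 1)) := by
          apply mul_le_mul_of_nonneg_left _ (norm_nonneg _)
          exact mul_le_mul_of_nonneg_left
            (pow_le_pow_left₀ (by positivity) hBu _) hM0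
      _ = c₄ * ‖σ v‖ := by ring
  have hApos : 0 < ‖σ (u - J₀)‖ := by
    rw [norm_pos_iff]
    exact (map_ne_zero σ).mpr (sub_ne_zero.mpr huJ)
  have h2e : ‖σ (u - J₀)‖ ^ (2 * e) < ‖σ v‖ := by
    have hsq : ‖σ (u - J₀)‖ ^ (2 * e) = (‖σ (u - J₀)‖ ^ e) ^ 2 := by
      rw [pow_mul']
    rw [hsq]
    have h1 : (‖σ (u - J₀)‖ ^ e) ^ 2 ≤ (c₄ * ‖σ v‖) ^ 2 :=
      pow_le_pow_left₀ (pow_nonneg (norm_nonneg _) e) hA 2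
    have h2 : (c₄ * ‖σ v‖) ^ 2 < ‖σ v‖ := by
      have hcc : (0:ℝ) < c ^ 2 := by nlinarith
      have hfs : c ^ 2 * (1 / (2 * c ^ 2)) = 1 / 2 := by field_simp
      have hlt : c ^ 2 * ‖σ v‖ < 1 / 2 := by
        have h := mul_lt_mul_of_pos_left hvc hcc
        linarith
      have hle : (c₄ * ‖σ v‖) ^ 2 ≤ (c * ‖σ v‖) ^ 2 :=
        pow_le_pow_left₀ (mul_nonneg hc₄0 (norm_nonneg _))
          (mul_le_mul_of_nonneg_right hc₄c (norm_nonneg _)) 2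
      have h3 : (c ^ 2 * ‖σ v‖) * ‖σ v‖ < (1 / 2) * ‖σ v‖ := mul_lt_mul_of_pos_right hlt hv0
      calc (c₄ * ‖σ v‖) ^ 2 ≤ (c * ‖σ v‖) ^ 2 := hle
        _ = (c ^ 2 * ‖σ v‖) * ‖σ v‖ := by ring
        _ < (1 / 2) * ‖σ v‖ := h3
        _ < ‖σ v‖ := by linarith
    linarith
  have hlog := Real.log_lt_log (pow_pos hApos (2 * e)) h2e
  rw [Real.log_pow] at hlog
  have hepos : (0:ℝ) < 2 * (e:ℝ) := by
    have : (1:ℝ) ≤ (e:ℝ) := by exact_mod_cast he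
    linarith
  rw [lt_div_iff₀ hepos]
  push_cast at hlog
  linarith
end
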